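/- For any complex numbers u1, u2, any real number θ, and all nonnegative reals t1, t2, Re[(u1 - u2 e^{iθ}) · conj(u1 t1 - u2 t2 e^{iθ})] ≥ (|u1| - |u2|)(|u1| t1 - |u2| t2). -/

import Mathlib

theorem stmt0 (u1 u2 : ℂ) (θ t1 t2 : ℝ) (ht1 : 0 ≤ t1) (ht2 : 0 ≤ t2) :
    (‖u1‖ - ‖u2‖) * (‖u1‖ * t1 - ‖u2‖ * t2) ≤
      ((u1 - u2 * Complex.exp (θ * Complex.I)) *
        (starRingEnd ℂ) (u1 * (t1 : ℂ) - u2 * (t2 : ℂ) * Complex.exp (θ * Complex.I))).re := by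
  set e := Complex.exp (θ * Complex.I) with he
  have habs_e : ‖e‖ = 1 := by
    simp [he, Complex.norm_exp_ofReal_mul_I]
  have hee : e * (starRingEnd ℂ) e = 1 := by
    rw [Complex.mul_conj]
    norm_cast
    rw [Complex.normSq_eq_norm_sq, habs_e]
    norm_num
  have key : (u1 * (starRingEnd ℂ) (u2 * e)).re ≤ ‖u1‖ * ‖u2‖ := by
    calc (u1 * (starRingEnd ℂ) (u2 * e)).re
        ≤ ‖u1 * (starRingEnd ℂ) (u2 * e)‖ := Complex.re_le_norm _
      _ = ‖u1‖ * (‖u2‖ * ‖e‖) := by simp [map_mul]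
      _ = ‖u1‖ * ‖u2‖ := by rw [habs_e]; ring
  have h1 : (u1 - u2 * e) * (starRingEnd ℂ) (u1 * (t1 : ℂ) - u2 * (t2 : ℂ) * e)
      = (t1 : ℂ) * (u1 * (starRingEnd ℂ) u1)
        + (t2 : ℂ) * (u2 * (starRingEnd ℂ) u2) * (e * (starRingEnd ℂ) e)
        - ((t1 : ℂ) * (starRingEnd ℂ) (u1 * (starRingEnd ℂ) (u2 * e))
          + (t2 : ℂ) * (u1 * (starRingEnd ℂ) (u2 * e))) := by
    simp only [map_sub, map_mul, Complex.conj_conj, Complex.conj_ofReal]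
    ring
  have expand : ((u1 - u2 * e) * (starRingEnd ℂ) (u1 * (t1 : ℂ) - u2 * (t2 : ℂ) * e)).re
      = t1 * (‖u1‖)^2 + t2 * (‖u2‖)^2
        - (t1 + t2) * (u1 * (starRingEnd ℂ) (u2 * e)).re := by
    rw [h1, hee]
    simp only [Complex.mul_conj, mul_one, Complex.sub_re, Complex.add_re,
      Complex.re_ofReal_mul, Complex.conj_re]
    rw [Complex.normSq_eq_norm_sq, Complex.normSq_eq_norm_sq]
    simp only [← Complex.ofReal_pow, Complex.ofReal_re]
    ring
  rw [expand]
  nlinarith [mul_le_mul_of_nonneg_left key (by linarith : (0:ℝ) ≤ t1 + t2)]
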